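/- arXiv:1607.04045 — 4 statements merged into one kernel-verified Lean document; each statement's English description precedes it below -/
import Mathlib

section
/- Let H > 0 and let (Z_t)_{t ≥ 0} be an H-self-similar stochastic process with continuous paths such that E[ sup_{t ∈ [0,1]} |Z_t| ] < ∞. Then lim_{n → ∞} n^{−H} E[ max_{k = 1, …, n} Z_k ] = E[ sup_{t ∈ [0,1]} Z_t ]. -/
/-!
Evaluating the self-similarity relation at `c = n` turns `max_{k ≤ n} Z_k` into `n^H` times the
maximum of `Z` over the grid `{1/n, …, n/n}`, without changing its law. After normalisation it
remains to see that the expected grid maxima converge to `E[sup_{[0,1]} Z]`: pathwise this is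
continuity of `Z`, and `sup_{[0,1]} |Z|` is an integrable dominating function.
-/

open MeasureTheory ProbabilityTheory Filter Topology
open scoped ENNReal NNReal

/-- For `n = 0` this is the empty supremum, `0`. -/
noncomputable def gridSup (f : ℝ≥0 → ℝ) (n : ℕ) : ℝ :=
  ⨆ k : Fin n, f (((k : ℕ) + 1 : ℝ≥0) / n)

namespace gridSup

lemma measurable (n : ℕ) : Measurable fun f : ℝ≥0 → ℝ => gridSup f n :=
  Measurable.iSup fun _ => measurable_pi_apply _

lemma comp_natCast_mul (f : ℝ≥0 → ℝ) (n : ℕ) :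
    gridSup (fun t => f (n * t)) n = ⨆ k : Fin n, f ((k : ℕ) + 1 : ℝ≥0) := by
  refine iSup_congr fun k => congrArg f ?_
  have hn : (n : ℝ≥0) ≠ 0 := Nat.cast_ne_zero.mpr (Fin.pos k).ne'
  rw [mul_div_cancel₀ _ hn]

lemma const_mul (f : ℝ≥0 → ℝ) (n : ℕ) {c : ℝ} (hc : 0 ≤ c) :
    gridSup (fun t => c * f t) n = c * gridSup f n :=
  (Real.mul_iSup_of_nonneg hc _).symm

lemma le_of_forall_le {f : ℝ≥0 → ℝ} {n : ℕ} (hn : 1 ≤ n) {M : ℝ}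
    (hM : ∀ t ∈ Set.Icc (0 : ℝ≥0) 1, f t ≤ M) : gridSup f n ≤ M := by
  have : Nonempty (Fin n) := Fin.pos_iff_nonempty.mp hn
  refine ciSup_le fun k => hM _ ⟨zero_le, ?_⟩
  rw [div_le_one (by positivity)]
  exact_mod_cast k.isLt

lemma apply_div_le {m n : ℕ} (hm : 1 ≤ m) (hmn : m ≤ n) (f : ℝ≥0 → ℝ) :
    f (m / n) ≤ gridSup f n := by
  have hk : m - 1 < n := by omega
  calc f (m / n) = f ((((⟨m - 1, hk⟩ : Fin n) : ℕ) + 1 : ℝ≥0) / n) := by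
        rw [Fin.val_mk, ← Nat.cast_add_one, Nat.sub_add_cancel hm]
    _ ≤ gridSup f n :=
      le_ciSup (Set.finite_range fun k : Fin n => f (((k : ℕ) + 1 : ℝ≥0) / n)).bddAbove _

lemma abs_le {f : ℝ≥0 → ℝ} (hf : Continuous f) {n : ℕ} (hn : 1 ≤ n) :
    |gridSup f n| ≤ ⨆ t : Set.Icc (0 : ℝ≥0) 1, |f t| := by
  have hbdd : BddAbove (Set.range fun t : Set.Icc (0 : ℝ≥0) 1 => |f t|) :=
    (isCompact_range (by fun_prop)).bddAbove
  have habs : ∀ t ∈ Set.Icc (0 : ℝ≥0) 1, |f t| ≤ ⨆ s : Set.Icc (0 : ℝ≥0) 1, |f s| :=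
    fun t ht => le_ciSup hbdd ⟨t, ht⟩
  refine _root_.abs_le.mpr ⟨?_, le_of_forall_le hn fun t ht => (le_abs_self _).trans (habs t ht)⟩
  calc -⨆ s : Set.Icc (0 : ℝ≥0) 1, |f s| ≤ -|f (1 / n)| := by
        refine neg_le_neg (habs _ ⟨zero_le, ?_⟩)
        rw [div_le_one (by positivity)]
        exact_mod_cast hn
    _ ≤ f (1 / n) := neg_abs_le _
    _ ≤ gridSup f n := by exact_mod_cast apply_div_le le_rfl hn f

end gridSup

/-- `max 1` keeps the numerator a grid index `≥ 1` also when `t = 0`. -/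
lemma tendsto_max_one_ceil_mul_div (t : ℝ≥0) :
    Tendsto (fun n : ℕ => ((max 1 ⌈(t : ℝ) * n⌉₊ : ℕ) : ℝ≥0) / n) atTop (𝓝 t) := by
  rw [← NNReal.tendsto_coe]
  have hceil : Tendsto (fun n : ℕ => (⌈(t : ℝ) * n⌉₊ : ℝ) / n) atTop (𝓝 t) :=
    (tendsto_nat_ceil_mul_div_atTop t.2).comp tendsto_natCast_atTop_atTop
  have hmax := (tendsto_one_div_atTop_nhds_zero_nat (𝕜 := ℝ)).max hceil
  rw [max_eq_right (NNReal.coe_nonneg t)] at hmax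
  refine hmax.congr fun n => ?_
  push_cast
  exact max_div_div_right n.cast_nonneg _ _

lemma tendsto_gridSup {f : ℝ≥0 → ℝ} (hf : Continuous f) :
    Tendsto (gridSup f) atTop (𝓝 (⨆ t : Set.Icc (0 : ℝ≥0) 1, f t)) := by
  obtain ⟨t₀, ht₀, hmax⟩ :=
    isCompact_Icc.exists_isMaxOn (Set.nonempty_Icc.mpr zero_le_one) hf.continuousOn
  have hsup : ⨆ t : Set.Icc (0 : ℝ≥0) 1, f t = f t₀ :=
    le_antisymm (ciSup_le fun t => hmax t.2)
      (le_ciSup (isCompact_range (hf.comp continuous_subtype_val)).bddAbove ⟨t₀, ht₀⟩)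
  rw [hsup]
  have hgrid := (hf.tendsto t₀).comp (tendsto_max_one_ceil_mul_div t₀)
  refine tendsto_of_tendsto_of_tendsto_of_le_of_le' hgrid tendsto_const_nhds ?_ ?_
  · filter_upwards [eventually_ge_atTop 1] with n hn
    refine gridSup.apply_div_le (le_max_left _ _) (max_le hn (Nat.ceil_le.mpr ?_)) f
    simpa using mul_le_of_le_one_left n.cast_nonneg (NNReal.coe_le_one.mpr ht₀.2)
  · filter_upwards [eventually_ge_atTop 1] with n hn
    exact gridSup.le_of_forall_le hn fun t ht => hmax ht

lemma integral_iSup_natCast_eq_rpow_mul {Ω : Type*} [MeasureSpace Ω] {H : ℝ}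
    {Z : Ω → ℝ≥0 → ℝ} (hmeas : ∀ t : ℝ≥0, Measurable fun ω => Z ω t) {n : ℕ}
    (hss : Measure.map (fun ω => fun t => Z ω (n * t)) ℙ
      = Measure.map (fun ω => fun t => ((n : ℝ≥0) : ℝ) ^ H * Z ω t) (ℙ : Measure Ω)) :
    ∫ ω, (⨆ k : Fin n, Z ω ((k : ℕ) + 1 : ℝ≥0)) ∂ℙ = (n : ℝ) ^ H * ∫ ω, gridSup (Z ω) n ∂ℙ := by
  have hident : IdentDistrib (fun ω => fun t => Z ω (n * t))
      (fun ω => fun t => ((n : ℝ≥0) : ℝ) ^ H * Z ω t) ℙ ℙ :=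
    ⟨(measurable_pi_lambda _ fun _ => hmeas _).aemeasurable,
      (measurable_pi_lambda _ fun t => (hmeas t).const_mul _).aemeasurable, hss⟩
  have := (hident.comp (gridSup.measurable n)).integral_eq
  simp only [Function.comp_def, gridSup.comp_natCast_mul,
    gridSup.const_mul _ _ (Real.rpow_nonneg (NNReal.coe_nonneg _) H)] at this
  rw [this, integral_const_mul, NNReal.coe_natCast]

theorem selfSimilar_expected_max_limit_general
    {Ω : Type*} [MeasureSpace Ω]
    {H : ℝ} (Z : Ω → ℝ≥0 → ℝ)
    (hmeas : ∀ t : ℝ≥0, Measurable fun ω => Z ω t)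
    (hcont : ∀ ω, Continuous (Z ω))
    (hss : ∀ c : ℝ≥0, 0 < c →
      Measure.map (fun ω => fun t => Z ω (c * t)) ℙ
        = Measure.map (fun ω => fun t => (c : ℝ) ^ H * Z ω t) (ℙ : Measure Ω))
    (hint : Integrable (fun ω => ⨆ t : Set.Icc (0 : ℝ≥0) 1, |Z ω t|) ℙ) :
    Tendsto
      (fun n : ℕ => (n : ℝ) ^ (-H) * ∫ ω, (⨆ k : Fin n, Z ω ((k : ℕ) + 1 : ℝ≥0)) ∂ℙ)
      atTop (𝓝 (∫ ω, (⨆ t : Set.Icc (0 : ℝ≥0) 1, Z ω t) ∂(ℙ : Measure Ω))) := by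
  have hnormalize : ∀ᶠ n : ℕ in atTop, ∫ ω, gridSup (Z ω) n ∂ℙ
      = (n : ℝ) ^ (-H) * ∫ ω, (⨆ k : Fin n, Z ω ((k : ℕ) + 1 : ℝ≥0)) ∂ℙ := by
    filter_upwards [eventually_ge_atTop 1] with n hn
    have hn' : (0 : ℝ) < n := by exact_mod_cast hn
    rw [integral_iSup_natCast_eq_rpow_mul hmeas (hss n (by exact_mod_cast hn)), ← mul_assoc,
      ← Real.rpow_add hn', neg_add_cancel, Real.rpow_zero, one_mul]
  refine Tendsto.congr' hnormalize (tendsto_integral_filter_of_dominated_convergence _ ?_ ?_ hint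
    (Eventually.of_forall fun ω => tendsto_gridSup (hcont ω)))
  · exact Eventually.of_forall fun n =>
      ((gridSup.measurable n).comp (measurable_pi_lambda _ hmeas)).aestronglyMeasurable
  · filter_upwards [eventually_ge_atTop 1] with n hn
    exact Eventually.of_forall fun ω => gridSup.abs_le (hcont ω) hn

/-- For an `H`-self-similar process `Z` with continuous paths and integrable running
supremum on `[0,1]`, the normalized expected discrete maxima converge:
`lim_{n → ∞} n^{-H} E[max_{k=1,…,n} Z_k] = E[sup_{t ∈ [0,1]} Z_t]`. -/
theorem selfSimilar_expected_max_limit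
    {Ω : Type*} [MeasureSpace Ω] [IsProbabilityMeasure (ℙ : Measure Ω)]
    {H : ℝ} (hH : 0 < H) (Z : Ω → ℝ≥0 → ℝ)
    (hmeas : ∀ t : ℝ≥0, Measurable fun ω => Z ω t)
    (hcont : ∀ ω, Continuous (Z ω))
    (hss : ∀ c : ℝ≥0, 0 < c →
      Measure.map (fun ω => fun t => Z ω (c * t)) ℙ
        = Measure.map (fun ω => fun t => (c : ℝ) ^ H * Z ω t) (ℙ : Measure Ω))
    (hint : Integrable (fun ω => ⨆ t : Set.Icc (0 : ℝ≥0) 1, |Z ω t|) ℙ) :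
    Tendsto
      (fun n : ℕ => (n : ℝ) ^ (-H) * ∫ ω, (⨆ k : Fin n, Z ω ((k : ℕ) + 1 : ℝ≥0)) ∂ℙ)
      atTop (𝓝 (∫ ω, (⨆ t : Set.Icc (0 : ℝ≥0) 1, Z ω t) ∂(ℙ : Measure Ω))) :=
  selfSimilar_expected_max_limit_general Z hmeas hcont hss hint
end

section
/- Let H > 0 and let (Z_t)_{t ≥ 0} be an H-self-similar stochastic process with continuous paths, stationary increments, and Z₀ = 0. Then for every δ ∈ (0, 1] and every N ∈ ℕ: P( sup_{t ∈ [0, Nδ]} Z_t ≤ 1 ) ≥ P( max_{k = 1, …, N} Z_k < 0 ) − N · P( sup_{t ∈ (0, 1]} Z_t > δ^{−H} ). -/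
open MeasureTheory ProbabilityTheory
open scoped ENNReal NNReal

/-!
Self-similarity at scale `δ` turns `{Z ≤ 1 on [0, Nδ]}` into `{Z ≤ δ^{-H} on [0, N]}`. A path
that is negative at `1, …, N` can only miss the latter event by rising more than `δ^{-H}` above
`Z_k` on some `[k, k + 1]`, `k < N`; by stationarity each of these `N` events has the probability
of `{sup_{(0,1]} Z > δ^{-H}}`, and a union bound concludes. Events over uncountably many times
are handled by sampling the continuous paths along a countable dense set, which makes them
measurable in path space, so that equalities of laws apply to them.
-/

open TopologicalSpace

section PathSpace

variable {T : Type*} [TopologicalSpace T] [LinearOrder T] [SeparableSpace T] [Nonempty T]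

/-- A countable intersection of cylinder sets, hence measurable for the product σ-algebra,
which on continuous paths detects `∀ t ≤ M, g t ≤ y` (`mem_samplesLE_iff`). -/
def samplesLE (M : T) (y : ℝ) : Set (T → ℝ) :=
  {g | g M ≤ y} ∩ ⋂ n : ℕ, {g | denseSeq T n < M → g (denseSeq T n) ≤ y}

theorem measurableSet_samplesLE (M : T) (y : ℝ) : MeasurableSet (samplesLE M y) := by
  refine (measurableSet_le (measurable_pi_apply M) measurable_const).inter ?_
  refine MeasurableSet.iInter fun n => ?_
  by_cases hn : denseSeq T n < M
  · simpa [hn] using measurableSet_le (measurable_pi_apply _) measurable_const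
  · simp [hn]

variable [OrderTopology T]

theorem mem_samplesLE_iff {g : T → ℝ} (hg : Continuous g) {M : T} {y : ℝ} :
    g ∈ samplesLE M y ↔ ∀ t ≤ M, g t ≤ y := by
  simp only [samplesLE, Set.mem_inter_iff, Set.mem_iInter]
  refine ⟨fun ⟨hM, hdense⟩ t ht => ?_, fun h => ⟨h M le_rfl, fun n hn => h _ hn.le⟩⟩
  rcases ht.lt_or_eq with ht | rfl
  · have hsub : Set.Iio M ∩ Set.range (denseSeq T) ⊆ {x | g x ≤ y} := by
      rintro _ ⟨hlt, n, rfl⟩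
      exact hdense n hlt
    exact closure_minimal hsub (isClosed_le hg continuous_const)
      ((denseRange_denseSeq T).open_subset_closure_inter isOpen_Iio ht)
  · exact hM

theorem preimage_samplesLE {α : Type*} {X : α → T → ℝ} (hX : ∀ a, Continuous (X a))
    (M : T) (y : ℝ) : X ⁻¹' samplesLE M y = {a | ∀ t ≤ M, X a t ≤ y} := by
  ext a
  exact mem_samplesLE_iff (hX a)

theorem preimage_compl_samplesLE {α : Type*} {X : α → T → ℝ} (hX : ∀ a, Continuous (X a))
    (M : T) (y : ℝ) : X ⁻¹' (samplesLE M y)ᶜ = {a | ∃ t ≤ M, y < X a t} := by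
  simp [Set.preimage_compl, preimage_samplesLE hX, Set.compl_ofPred]

variable {Ω Ω' : Type*} [MeasurableSpace Ω] [MeasurableSpace Ω'] {μ : Measure Ω}
  {ν : Measure Ω'} {X : Ω → T → ℝ} {Y : Ω' → T → ℝ}

theorem ProbabilityTheory.IdentDistrib.measure_forall_le_eq (h : IdentDistrib X Y μ ν)
    (hX : ∀ ω, Continuous (X ω)) (hY : ∀ ω, Continuous (Y ω)) (M : T) (y : ℝ) :
    μ {ω | ∀ t ≤ M, X ω t ≤ y} = ν {ω | ∀ t ≤ M, Y ω t ≤ y} := by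
  rw [← preimage_samplesLE hX, ← preimage_samplesLE hY]
  exact h.measure_mem_eq (measurableSet_samplesLE M y)

theorem ProbabilityTheory.IdentDistrib.measure_exists_lt_eq (h : IdentDistrib X Y μ ν)
    (hX : ∀ ω, Continuous (X ω)) (hY : ∀ ω, Continuous (Y ω)) (M : T) (y : ℝ) :
    μ {ω | ∃ t ≤ M, y < X ω t} = ν {ω | ∃ t ≤ M, y < Y ω t} := by
  rw [← preimage_compl_samplesLE hX, ← preimage_compl_samplesLE hY]
  exact h.measure_mem_eq (measurableSet_samplesLE M y).compl

end PathSpace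

theorem NNReal.exists_nat_le_le_add_one {s : ℝ≥0} (hs : 0 < s) {N : ℕ} (hsN : s ≤ N) :
    ∃ k : ℕ, k < N ∧ (k : ℝ≥0) ≤ s ∧ s ≤ k + 1 := by
  have hceil : 1 ≤ ⌈s⌉₊ := Nat.one_le_ceil_iff.2 hs
  refine ⟨⌈s⌉₊ - 1, ?_, ?_, ?_⟩
  · have := Nat.ceil_le.2 hsN
    omega
  · exact (Nat.lt_ceil.1 (by omega)).le
  · have := Nat.le_ceil s
    rwa [← Nat.cast_add_one, Nat.sub_add_cancel hceil]

theorem forall_le_of_increments_le {f : ℝ≥0 → ℝ} {c : ℝ} {N : ℕ} (hf0 : f 0 ≤ c)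
    (hint : ∀ k : ℕ, k < N → f k ≤ 0)
    (hinc : ∀ k : ℕ, k < N → ∀ t ≤ 1, f (t + k) - f k ≤ c) :
    ∀ s ≤ (N : ℝ≥0), f s ≤ c := by
  intro s hsN
  rcases (zero_le (a := s)).lt_or_eq with hs | rfl
  · obtain ⟨k, hkN, hks, hsk⟩ := NNReal.exists_nat_le_le_add_one hs hsN
    have hincr := hinc k hkN (s - k) (tsub_le_iff_left.2 hsk)
    rw [tsub_add_cancel_of_le hks] at hincr
    linarith [hint k hkN]
  · exact hf0

section Persistence

variable {Ω : Type*} {Z : Ω → ℝ≥0 → ℝ}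

theorem subset_forall_le_union_increments_gt (hZ0 : ∀ ω, Z ω 0 = 0) {c : ℝ} (hc : 0 ≤ c)
    (N : ℕ) :
    {ω | ∀ k : ℕ, 1 ≤ k → k ≤ N → Z ω k < 0} ⊆
      {ω | ∀ s ≤ (N : ℝ≥0), Z ω s ≤ c} ∪
        ⋃ k ∈ Finset.range N, {ω | ∃ t ≤ 1, c < Z ω (t + k) - Z ω k} := by
  intro ω hω
  rw [Set.mem_union, or_iff_not_imp_right]
  intro hincr
  simp only [Set.mem_iUnion, Finset.mem_range, Set.mem_ofPred_eq, not_exists, not_and,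
    not_lt] at hincr
  refine forall_le_of_increments_le (by rw [hZ0]; exact hc) (fun k hk => ?_) hincr
  rcases k with _ | k
  · simp [hZ0]
  · exact (hω _ (by omega) hk.le).le

variable [MeasurableSpace Ω] {μ : Measure Ω}

theorem measure_forall_le_mul_eq_of_map_eq {H : ℝ} {c : ℝ≥0} (hc : 0 < c)
    (hmeas : ∀ t, Measurable fun ω => Z ω t) (hcont : ∀ ω, Continuous (Z ω))
    (hss : μ.map (fun ω t => Z ω (c * t)) = μ.map (fun ω t => (c : ℝ) ^ H * Z ω t))
    (M : ℝ≥0) :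
    μ {ω | ∀ t ≤ M * c, Z ω t ≤ 1} = μ {ω | ∀ t ≤ M, Z ω t ≤ (c : ℝ) ^ (-H)} := by
  have hid : IdentDistrib (fun ω t => Z ω (c * t)) (fun ω t => (c : ℝ) ^ H * Z ω t) μ μ :=
    ⟨(measurable_pi_lambda _ fun _ => hmeas _).aemeasurable,
      (measurable_pi_lambda _ fun t => (hmeas t).const_mul _).aemeasurable, hss⟩
  have hscale : {ω | ∀ t ≤ M * c, Z ω t ≤ 1} = {ω | ∀ u ≤ M, Z ω (c * u) ≤ 1} := by
    ext ω
    refine ⟨fun h u hu => h _ ?_, fun h t ht => ?_⟩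
    · rw [mul_comm]
      exact mul_le_mul_left hu c
    · simpa [mul_div_cancel₀ _ hc.ne'] using h (t / c) ((div_le_iff₀ hc).2 ht)
  have hlevel : {ω | ∀ t ≤ M, Z ω t ≤ (c : ℝ) ^ (-H)} =
      {ω | ∀ t ≤ M, (c : ℝ) ^ H * Z ω t ≤ 1} := by
    have hcH : (0 : ℝ) < (c : ℝ) ^ H := Real.rpow_pos_of_pos (by exact_mod_cast hc) H
    simp only [Real.rpow_neg c.coe_nonneg, ← le_div_iff₀' hcH, one_div]
  rw [hscale, hlevel]
  exact hid.measure_forall_le_eq (fun ω => (hcont ω).comp (continuous_const.mul continuous_id))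
    (fun ω => continuous_const.mul (hcont ω)) M 1

theorem measure_exists_increment_gt_eq_of_map_eq (hmeas : ∀ t, Measurable fun ω => Z ω t)
    (hcont : ∀ ω, Continuous (Z ω)) {s : ℝ≥0}
    (hstat : μ.map (fun ω t => Z ω (t + s) - Z ω s) = μ.map (fun ω t => Z ω t))
    (M : ℝ≥0) (y : ℝ) :
    μ {ω | ∃ t ≤ M, y < Z ω (t + s) - Z ω s} = μ {ω | ∃ t ≤ M, y < Z ω t} :=
  IdentDistrib.measure_exists_lt_eq
    ⟨(measurable_pi_lambda _ fun _ => (hmeas _).sub (hmeas s)).aemeasurable,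
      (measurable_pi_lambda _ hmeas).aemeasurable, hstat⟩
    (fun ω => ((hcont ω).comp (continuous_id.add continuous_const)).sub continuous_const)
    hcont M y

end Persistence

theorem persistence_discretization_lower_bound_general
    {Ω : Type*} [MeasureSpace Ω]
    {H : ℝ} (Z : Ω → ℝ≥0 → ℝ)
    (hmeas : ∀ t : ℝ≥0, Measurable fun ω => Z ω t)
    (hcont : ∀ ω, Continuous (Z ω))
    (hZ0 : ∀ ω, Z ω 0 = 0)
    (hss : ∀ c : ℝ≥0, 0 < c →
      Measure.map (fun ω => fun t => Z ω (c * t)) ℙ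
        = Measure.map (fun ω => fun t => (c : ℝ) ^ H * Z ω t) (ℙ : Measure Ω))
    (hstat : ∀ s : ℝ≥0,
      Measure.map (fun ω => fun t => Z ω (t + s) - Z ω s) ℙ
        = Measure.map (fun ω => fun t => Z ω t) (ℙ : Measure Ω))
    (δ : ℝ≥0) (hδ : 0 < δ) (N : ℕ) :
    ℙ {ω | ∀ k : ℕ, 1 ≤ k → k ≤ N → Z ω (k : ℝ≥0) < 0}
        - (N : ℝ≥0∞) * ℙ {ω | ∃ t : ℝ≥0, 0 < t ∧ t ≤ 1 ∧ (δ : ℝ) ^ (-H) < Z ω t}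
      ≤ ℙ {ω | ∀ t : ℝ≥0, t ≤ (N : ℝ≥0) * δ → Z ω t ≤ 1} := by
  set c := (δ : ℝ) ^ (-H)
  have hc : 0 < c := Real.rpow_pos_of_pos (by exact_mod_cast hδ) _
  have hincr : ∀ k : ℕ, ℙ {ω | ∃ t ≤ 1, c < Z ω (t + k) - Z ω k} =
      ℙ {ω | ∃ t : ℝ≥0, 0 < t ∧ t ≤ 1 ∧ c < Z ω t} := by
    intro k
    rw [measure_exists_increment_gt_eq_of_map_eq hmeas hcont (hstat k)]
    congr 1
    ext ω
    refine ⟨fun ⟨t, ht1, hct⟩ => ⟨t, pos_iff_ne_zero.2 ?_, ht1, hct⟩,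
      fun ⟨t, _, ht1, hct⟩ => ⟨t, ht1, hct⟩⟩
    rintro rfl
    linarith [hZ0 ω]
  rw [tsub_le_iff_right, measure_forall_le_mul_eq_of_map_eq hδ hmeas hcont (hss δ hδ)]
  calc _ ≤ _ := measure_mono (subset_forall_le_union_increments_gt hZ0 hc.le N)
    _ ≤ ℙ {ω | ∀ s ≤ (N : ℝ≥0), Z ω s ≤ c} +
          ∑ k ∈ Finset.range N, ℙ {ω | ∃ t ≤ 1, c < Z ω (t + k) - Z ω k} :=
        (measure_union_le _ _).trans (by gcongr; exact measure_biUnion_finset_le _ _)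
    _ = _ := by simp [hincr, c]

/-- For an `H`-self-similar process `Z` with continuous paths, stationary increments and
`Z₀ = 0`, for every `δ ∈ (0,1]` and `N ∈ ℕ`:
`ℙ(sup_{t ∈ [0, Nδ]} Z_t ≤ 1) ≥ ℙ(max_{k=1,…,N} Z_k < 0) - N · ℙ(sup_{t ∈ (0,1]} Z_t > δ^{-H})`. -/
theorem persistence_discretization_lower_bound
    {Ω : Type*} [MeasureSpace Ω] [IsProbabilityMeasure (ℙ : Measure Ω)]
    {H : ℝ} (hH : 0 < H) (Z : Ω → ℝ≥0 → ℝ)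
    (hmeas : ∀ t : ℝ≥0, Measurable fun ω => Z ω t)
    (hcont : ∀ ω, Continuous (Z ω))
    (hZ0 : ∀ ω, Z ω 0 = 0)
    (hss : ∀ c : ℝ≥0, 0 < c →
      Measure.map (fun ω => fun t => Z ω (c * t)) ℙ
        = Measure.map (fun ω => fun t => (c : ℝ) ^ H * Z ω t) (ℙ : Measure Ω))
    (hstat : ∀ s : ℝ≥0,
      Measure.map (fun ω => fun t => Z ω (t + s) - Z ω s) ℙ
        = Measure.map (fun ω => fun t => Z ω t) (ℙ : Measure Ω))
    (δ : ℝ≥0) (hδ : 0 < δ) (hδ1 : δ ≤ 1) (N : ℕ) :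
    ℙ {ω | ∀ k : ℕ, 1 ≤ k → k ≤ N → Z ω (k : ℝ≥0) < 0}
        - (N : ℝ≥0∞) * ℙ {ω | ∃ t : ℝ≥0, 0 < t ∧ t ≤ 1 ∧ (δ : ℝ) ^ (-H) < Z ω t}
      ≤ ℙ {ω | ∀ t : ℝ≥0, t ≤ (N : ℝ≥0) * δ → Z ω t ≤ 1} :=
  persistence_discretization_lower_bound_general Z hmeas hcont hZ0 hss hstat δ hδ N
end

section
/- Let γ be the standard Gaussian measure on ℝ and let f : ℝ → ℝ be a convex function with ∫ f(x)² dγ(x) < ∞. If ∫ f(x) dγ(x) = 0, ∫ x f(x) dγ(x) = 0, and ∫ f(x)(x² − 1) dγ(x) = 0, then f(x) = 0 for all x ∈ ℝ. Equivalently, every nonzero convex function in L²(ℝ, γ) has Hermite rank at most 2. -/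
open MeasureTheory ProbabilityTheory Polynomial
open scoped NNReal

/-! Since `f` is convex, `{f < 0}` is an interval, so a nonzero polynomial `Q` of degree at most
two vanishing at its finite endpoints satisfies `f * Q ≤ 0` everywhere. Orthogonality to `1`, `x`
and `x² - 1` is orthogonality to every polynomial of degree at most two, so `∫ f Q dγ = 0`, hence
`f Q = 0` almost everywhere. As `Q` has finitely many roots and `f` is continuous, `f = 0`. -/

theorem Set.OrdConnected.mem_lowerBounds_or_mem_upperBounds {α : Type*} [LinearOrder α]
    {S : Set α} (hS : S.OrdConnected) {x : α} (hx : x ∉ S) :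
    x ∈ lowerBounds S ∨ x ∈ upperBounds S := by
  by_contra h
  simp only [not_or, mem_lowerBounds, mem_upperBounds, not_forall, not_le, exists_prop] at h
  obtain ⟨⟨s, hs, hxs⟩, ⟨t, ht, htx⟩⟩ := h
  exact hx (hS.out hs ht ⟨hxs.le, htx.le⟩)

theorem exists_natDegree_le_one_nonpos_on_lowerBounds {S : Set ℝ} (hS : S.Nonempty) :
    ∃ L : ℝ[X], L.natDegree ≤ 1 ∧ L ≠ 0 ∧ (∀ x ∈ lowerBounds S, L.eval x ≤ 0) ∧
      ∀ s ∈ S, ∀ x, s ≤ x → 0 ≤ L.eval x := by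
  by_cases hb : BddBelow S
  · refine ⟨X - C (sInf S), (natDegree_X_sub_C _).le, X_sub_C_ne_zero _,
      fun x hx => ?_, fun s hs x hsx => ?_⟩
    · simpa using le_csInf hS hx
    · simpa using (csInf_le hb hs).trans hsx
  · exact ⟨1, by simp, one_ne_zero, fun x hx => (hb ⟨x, hx⟩).elim, fun _ _ _ _ => by simp⟩

theorem exists_natDegree_le_one_nonpos_on_upperBounds {S : Set ℝ} (hS : S.Nonempty) :
    ∃ U : ℝ[X], U.natDegree ≤ 1 ∧ U ≠ 0 ∧ (∀ x ∈ upperBounds S, U.eval x ≤ 0) ∧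
      ∀ s ∈ S, ∀ x, x ≤ s → 0 ≤ U.eval x := by
  by_cases hb : BddAbove S
  · refine ⟨C (sSup S) - X, ?_, ?_, fun x hx => ?_, fun s hs x hxs => ?_⟩
    · rw [← neg_sub, natDegree_neg]; exact (natDegree_X_sub_C _).le
    · rw [← neg_sub, neg_ne_zero]; exact X_sub_C_ne_zero _
    · simpa using csSup_le hS hx
    · simpa using hxs.trans (le_csSup hb hs)
  · exact ⟨1, by simp, one_ne_zero, fun x hx => (hb ⟨x, hx⟩).elim, fun _ _ _ _ => by simp⟩

theorem Set.OrdConnected.exists_natDegree_le_two_nonneg_on_nonpos_off {S : Set ℝ}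
    (hS : S.OrdConnected) :
    ∃ Q : ℝ[X], Q.natDegree ≤ 2 ∧ Q ≠ 0 ∧
      ∀ x, (x ∈ S → 0 ≤ Q.eval x) ∧ (x ∉ S → Q.eval x ≤ 0) := by
  rcases S.eq_empty_or_nonempty with rfl | hne
  · exact ⟨-1, by simp, by simp, fun x => ⟨fun h => h.elim, fun _ => by simp⟩⟩
  obtain ⟨L, hLdeg, hL0, hLlow, hLup⟩ := exists_natDegree_le_one_nonpos_on_lowerBounds hne
  obtain ⟨U, hUdeg, hU0, hUup, hUlow⟩ := exists_natDegree_le_one_nonpos_on_upperBounds hne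
  obtain ⟨s, hs⟩ := hne
  refine ⟨L * U, natDegree_mul_le.trans (by omega), mul_ne_zero hL0 hU0, fun x => ⟨?_, ?_⟩⟩
  · intro hx
    rw [eval_mul]
    exact mul_nonneg (hLup x hx x le_rfl) (hUlow x hx x le_rfl)
  · intro hx
    rw [eval_mul]
    rcases hS.mem_lowerBounds_or_mem_upperBounds hx with hlow | hup
    · exact mul_nonpos_of_nonpos_of_nonneg (hLlow x hlow) (hUlow s hs x (hlow hs))
    · exact mul_nonpos_of_nonneg_of_nonpos (hLup s hs x (hup hs)) (hUup x hup)

theorem memLp_two_pow_gaussianReal (μ : ℝ) (v : ℝ≥0) (n : ℕ) :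
    MemLp (fun x => x ^ n) 2 (gaussianReal μ v) := by
  rw [memLp_two_iff_integrable_sq (by fun_prop)]
  refine ((memLp_id_gaussianReal (2 * n : ℕ)).integrable_norm_pow').congr (ae_of_all _ fun x => ?_)
  simp only [id_eq, Real.norm_eq_abs]
  rw [mul_comm, pow_mul, pow_abs, sq_abs]

theorem memLp_two_eval_gaussianReal (μ : ℝ) (v : ℝ≥0) (Q : ℝ[X]) :
    MemLp (fun x => Q.eval x) 2 (gaussianReal μ v) := by
  induction Q using Polynomial.induction_on' with
  | add P R hP hR => simp only [eval_add]; exact hP.add hR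
  | monomial n a => simpa using (memLp_two_pow_gaussianReal μ v n).const_mul a

theorem integral_mul_eval_eq_zero_of_natDegree_le_two {μ : Measure ℝ} {f : ℝ → ℝ}
    (hf0 : Integrable f μ) (hf1 : Integrable (fun x => x * f x) μ)
    (hf2 : Integrable (fun x => f x * (x ^ 2 - 1)) μ)
    (h0 : ∫ x, f x ∂μ = 0) (h1 : ∫ x, x * f x ∂μ = 0) (h2 : ∫ x, f x * (x ^ 2 - 1) ∂μ = 0)
    {Q : ℝ[X]} (hQ : Q.natDegree ≤ 2) :
    ∫ x, f x * Q.eval x ∂μ = 0 := by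
  have hQ_eval : ∀ x, f x * Q.eval x = Q.coeff 2 * (f x * (x ^ 2 - 1)) + Q.coeff 1 * (x * f x)
      + (Q.coeff 0 + Q.coeff 2) * f x := by
    intro x
    rw [eval_eq_sum_range' (n := 3) (by omega)]
    simp only [Finset.sum_range_succ, Finset.sum_range_zero]
    ring
  simp_rw [hQ_eval]
  rw [integral_add ((hf2.const_mul _).fun_add (hf1.const_mul _)) (hf0.const_mul _),
    integral_add (hf2.const_mul _) (hf1.const_mul _), integral_const_mul, integral_const_mul,
    integral_const_mul, h0, h1, h2]
  ring

theorem eq_zero_of_integral_mul_eval_eq_zero {μ : Measure ℝ} (hμ : μ ≪ volume)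
    (hμ' : volume ≪ μ) {f : ℝ → ℝ} (hf : Continuous f) {Q : ℝ[X]} (hQ : Q ≠ 0)
    (hsign : ∀ x, f x * Q.eval x ≤ 0) (hint : Integrable (fun x => f x * Q.eval x) μ)
    (h : ∫ x, f x * Q.eval x ∂μ = 0) : f = 0 := by
  have hprod : (fun x => -(f x * Q.eval x)) =ᵐ[μ] 0 :=
    (integral_eq_zero_iff_of_nonneg (fun x => neg_nonneg.2 (hsign x)) hint.neg).1
      (by rw [integral_neg, h, neg_zero])
  have hroots : ∀ᵐ x ∂μ, Q.eval x ≠ 0 :=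
    hμ.ae_le (measure_mono_null (fun x hx => by simpa using hx)
      ((finite_setOfPred_isRoot hQ).measure_zero volume))
  refine (hf.ae_eq_iff_eq volume continuous_zero).1 (hμ'.ae_le ?_)
  filter_upwards [hprod, hroots] with x hx hQx
  simpa [hQx] using hx

/-- A convex function in `L²` of the standard Gaussian measure `γ` that is orthogonal to
the first three Hermite polynomials `h₀(x) = 1`, `h₁(x) = x`, `h₂(x) = x² - 1` vanishes
identically. Equivalently, every nonzero convex function in `L²(ℝ, γ)` has Hermite rank
at most `2`. -/
theorem convex_hermite_rank_le_two
    (f : ℝ → ℝ) (hconv : ConvexOn ℝ Set.univ f)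
    (hL2 : Integrable (fun x => f x ^ 2) (gaussianReal 0 1))
    (h0 : ∫ x, f x ∂(gaussianReal 0 1) = 0)
    (h1 : ∫ x, x * f x ∂(gaussianReal 0 1) = 0)
    (h2 : ∫ x, f x * (x ^ 2 - 1) ∂(gaussianReal 0 1) = 0) :
    ∀ x, f x = 0 := by
  have hcont : Continuous f := continuousOn_univ.1 (hconv.continuousOn isOpen_univ)
  have hf : MemLp f 2 (gaussianReal 0 1) :=
    (memLp_two_iff_integrable_sq hcont.aestronglyMeasurable).2 hL2
  have hint : ∀ Q : ℝ[X], Integrable (fun x => f x * Q.eval x) (gaussianReal 0 1) :=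
    fun Q => hf.integrable_mul (memLp_two_eval_gaussianReal 0 1 Q)
  have hf2 : Integrable (fun x => f x * (x ^ 2 - 1)) (gaussianReal 0 1) := by
    have h := hint (X ^ 2 - 1)
    simp only [eval_sub, eval_pow, eval_X, eval_one] at h
    exact h
  have horth : ∀ Q : ℝ[X], Q.natDegree ≤ 2 → ∫ x, f x * Q.eval x ∂(gaussianReal 0 1) = 0 :=
    fun Q => integral_mul_eval_eq_zero_of_natDegree_le_two (by simpa using hint 1)
      (by simpa [mul_comm] using hint X) hf2 h0 h1 h2
  have hneg : Set.OrdConnected {x | f x < 0} := by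
    simpa using (hconv.convex_lt 0).ordConnected
  obtain ⟨Q, hQdeg, hQ, hQsign⟩ := hneg.exists_natDegree_le_two_nonneg_on_nonpos_off
  have hsign : ∀ x, f x * Q.eval x ≤ 0 := by
    intro x
    by_cases hx : f x < 0
    · exact mul_nonpos_of_nonpos_of_nonneg hx.le ((hQsign x).1 hx)
    · exact mul_nonpos_of_nonneg_of_nonpos (not_lt.1 hx) ((hQsign x).2 hx)
  exact congrFun <| eq_zero_of_integral_mul_eval_eq_zero
    (gaussianReal_absolutelyContinuous 0 one_ne_zero)
    (gaussianReal_absolutelyContinuous' 0 one_ne_zero) hcont hQ hsign (hint Q) (horth Q hQdeg)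
end

section
/- Let γ be the standard Gaussian measure on ℝ and let f : ℝ → ℝ be a convex function with ∫ f(x)² dγ(x) < ∞. If ∫ f(x)(x² − 1) dγ(x) = 0, then f is affine: there exist a, b ∈ ℝ with f(x) = a x + b for all x ∈ ℝ. -/
/-!
The even part `g x = f x + f (-x)` of `f` is convex and even, hence nondecreasing in `|x|`, so
`(g x - g 1) * (x ^ 2 - 1) ≥ 0` everywhere. As `x ^ 2 - 1` is even with Gaussian mean zero, this
nonnegative continuous function has zero Gaussian integral, so it vanishes and `g` is constant. Then
`f x = g 1 - f (-x)` is concave as well as convex, hence affine.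
-/

open MeasureTheory ProbabilityTheory Set NNReal

section Gaussian

variable {μ : ℝ} {v : ℝ≥0}

lemma memLp_sq_gaussianReal : MemLp (fun x ↦ x ^ 2) 2 (gaussianReal μ v) := by
  refine (memLp_two_iff_integrable_sq (by fun_prop)).2 ?_
  simpa [← pow_mul, Even.pow_abs ⟨2, rfl⟩] using
    (memLp_id_gaussianReal (μ := μ) (v := v) 4).integrable_norm_pow (p := 4) (by norm_num)

lemma integral_sq_gaussianReal : ∫ x, x ^ 2 ∂gaussianReal μ v = v + μ ^ 2 := by
  have := variance_eq_sub (memLp_id_gaussianReal' (μ := μ) (v := v) 2 (by simp))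
  simp only [variance_id_gaussianReal, Pi.pow_apply, id, integral_id_gaussianReal] at this
  linarith

lemma measurePreserving_neg_gaussianReal :
    MeasurePreserving (fun x ↦ -x) (gaussianReal 0 v) (gaussianReal 0 v) :=
  ⟨measurable_neg, by simpa using gaussianReal_map_neg (μ := 0) (v := v)⟩

lemma integral_comp_neg_gaussianReal (F : ℝ → ℝ) :
    ∫ x, F (-x) ∂gaussianReal 0 v = ∫ x, F x ∂gaussianReal 0 v :=
  measurePreserving_neg_gaussianReal.integral_comp measurableEmbedding_neg F

lemma Continuous.eq_zero_of_integral_gaussianReal_eq_zero {F : ℝ → ℝ} (hF : Continuous F)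
    (hF0 : 0 ≤ F) (hint : Integrable F (gaussianReal μ v)) (hv : v ≠ 0)
    (h : ∫ x, F x ∂gaussianReal μ v = 0) : F = 0 := by
  have hγ : F =ᵐ[gaussianReal μ v] 0 := (integral_eq_zero_iff_of_nonneg hF0 hint).1 h
  exact (hF.ae_eq_iff_eq volume continuous_const).1
    ((gaussianReal_absolutelyContinuous' μ hv).ae_eq hγ)

lemma memLp_hermite_two_gaussianReal : MemLp (fun x ↦ x ^ 2 - 1) 2 (gaussianReal μ v) :=
  memLp_sq_gaussianReal.sub (memLp_const 1)

lemma integral_hermite_two_gaussianReal : ∫ x, (x ^ 2 - 1) ∂gaussianReal 0 1 = 0 := by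
  rw [integral_sub (memLp_sq_gaussianReal.integrable one_le_two) (integrable_const 1),
    integral_sq_gaussianReal]
  simp

end Gaussian

section Convex

variable {f g : ℝ → ℝ}

lemma ConvexOn.le_of_abs_le_of_even (hg : ConvexOn ℝ univ g) (heven : ∀ x, g (-x) = g x)
    {x y : ℝ} (hxy : |x| ≤ |y|) : g x ≤ g y := by
  have hy : g |y| = g y := by rcases abs_choice y with h | h <;> simp [h, heven]
  have hx : x ∈ segment ℝ (-|y|) |y| := by
    rw [segment_eq_Icc (by simp [(abs_nonneg x).trans hxy])]
    exact abs_le.1 hxy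
  simpa [heven, hy] using hg.le_on_segment (mem_univ _) (mem_univ _) hx

lemma ConvexOn.sub_mul_sq_sub_one_nonneg_of_even (hg : ConvexOn ℝ univ g)
    (heven : ∀ x, g (-x) = g x) (x : ℝ) : 0 ≤ (g x - g 1) * (x ^ 2 - 1) := by
  rcases le_total |x| 1 with hx | hx
  · refine mul_nonneg_of_nonpos_of_nonpos ?_ ?_
    · simpa using hg.le_of_abs_le_of_even heven (y := 1) (by simpa using hx)
    · simpa using (sq_le_one_iff_abs_le_one x).2 hx
  · refine mul_nonneg ?_ ?_
    · simpa using hg.le_of_abs_le_of_even heven (x := 1) (by simpa using hx)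
    · simpa using (one_le_sq_iff_one_le_abs x).2 hx

lemma ConvexOn.eq_of_even_of_integral_mul_hermite_two_eq_zero (hg : ConvexOn ℝ univ g)
    (heven : ∀ x, g (-x) = g x)
    (hint : Integrable (fun x ↦ g x * (x ^ 2 - 1)) (gaussianReal 0 1))
    (h : ∫ x, g x * (x ^ 2 - 1) ∂gaussianReal 0 1 = 0) (x : ℝ) : g x = g 1 := by
  have hcont : Continuous g := continuousOn_univ.1 (hg.continuousOn isOpen_univ)
  have hint₁ : Integrable (fun x : ℝ ↦ g 1 * (x ^ 2 - 1)) (gaussianReal 0 1) :=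
    (memLp_hermite_two_gaussianReal.integrable one_le_two).const_mul (g 1)
  have hzero : (fun x ↦ (g x - g 1) * (x ^ 2 - 1)) = 0 := by
    refine Continuous.eq_zero_of_integral_gaussianReal_eq_zero (μ := 0) (by fun_prop)
      (hg.sub_mul_sq_sub_one_nonneg_of_even heven) ?_ one_ne_zero ?_ <;> simp_rw [sub_mul]
    · exact hint.sub hint₁
    · rw [integral_sub hint hint₁, integral_const_mul, h, integral_hermite_two_gaussianReal]
      simp
  rcases mul_eq_zero.1 (congrFun hzero x) with hx | hx
  · linarith
  · rcases sq_eq_one_iff.1 (sub_eq_zero.1 hx) with rfl | rfl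
    · rfl
    · exact heven 1

lemma ConvexOn.eq_slope_mul_add_of_concaveOn (hconv : ConvexOn ℝ univ f)
    (hconc : ConcaveOn ℝ univ f) (x : ℝ) : f x = slope f 0 1 * x + f 0 := by
  rcases eq_or_ne x 0 with rfl | hx
  · simp
  have hslope : slope f 0 x = slope f 0 1 := by
    have hmono := hconv.slope_mono (mem_univ 0)
    have hanti := hconc.slope_anti (mem_univ 0)
    have hx' : x ∈ univ \ {0} := ⟨mem_univ x, hx⟩
    have h1 : (1 : ℝ) ∈ univ \ {0} := ⟨mem_univ 1, one_ne_zero⟩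
    rcases le_total x 1 with h | h
    · exact le_antisymm (hmono hx' h1 h) (hanti hx' h1 h)
    · exact le_antisymm (hanti h1 hx' h) (hmono h1 hx' h)
  have := sub_smul_slope f 0 x
  rw [hslope, sub_zero, smul_eq_mul, vsub_eq_sub] at this
  linarith

end Convex

/-- A convex function in `L²` of the standard Gaussian measure `γ` that is orthogonal to
the second Hermite polynomial `h₂(x) = x² - 1` is affine. -/
theorem convex_orthogonal_hermite_two_affine
    (f : ℝ → ℝ) (hconv : ConvexOn ℝ Set.univ f)
    (hL2 : Integrable (fun x => f x ^ 2) (gaussianReal 0 1))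
    (h2 : ∫ x, f x * (x ^ 2 - 1) ∂(gaussianReal 0 1) = 0) :
    ∃ a b : ℝ, ∀ x, f x = a * x + b := by
  have hf : MemLp f 2 (gaussianReal 0 1) := (memLp_two_iff_integrable_sq
    (continuousOn_univ.1 (hconv.continuousOn isOpen_univ)).aestronglyMeasurable).2 hL2
  have hconv_neg : ConvexOn ℝ univ (fun x ↦ f (-x)) := hconv.comp_linearMap (-LinearMap.id)
  have hint : Integrable (fun x ↦ f x * (x ^ 2 - 1)) (gaussianReal 0 1) :=
    hf.integrable_mul memLp_hermite_two_gaussianReal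
  have hint_neg : Integrable (fun x ↦ f (-x) * (x ^ 2 - 1)) (gaussianReal 0 1) :=
    (hf.comp_measurePreserving measurePreserving_neg_gaussianReal).integrable_mul
      memLp_hermite_two_gaussianReal
  have hsymm : ∀ x, f x + f (-x) = f 1 + f (-1) := by
    refine ConvexOn.eq_of_even_of_integral_mul_hermite_two_eq_zero (g := fun x ↦ f x + f (-x))
      (hconv.add hconv_neg) (fun x ↦ by simp [add_comm]) ?_ ?_
    · simp_rw [add_mul]
      exact hint.add hint_neg
    · simp_rw [add_mul]
      have hneg := integral_comp_neg_gaussianReal (v := 1) (fun x ↦ f x * (x ^ 2 - 1))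
      simp only [neg_sq] at hneg
      rw [integral_add hint hint_neg, hneg, h2, add_zero]
  have hconc : ConcaveOn ℝ univ f := by
    refine ((concaveOn_const (f 1 + f (-1)) convex_univ).sub hconv_neg).congr fun x _ ↦ ?_
    simp [← hsymm x]
  exact ⟨_, _, hconv.eq_slope_mul_add_of_concaveOn hconc⟩
end
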